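/- arXiv:0901.4609 — 8 statements merged into one kernel-verified Lean document; each statement's English description precedes it below -/
import Mathlib

section
/- Let c₂ be a real number with c₂ ∉ {0, 1, 1/2, ±1/√5, -1}. Define v(α) = -((α+1)²((10α-5)c₂² - 15c₂α² + (α+1)(6α²-3α+1)))/(5c₂²-1), b̃₁(α) = (α²(α+1)(20c₂⁴ - (30α+10)c₂³ + (12α²+3α-13)c₂² + (4α²+11α+3)c₂ - 2α(α+1)))/(4c₂(5c₂²-1)(c₂+1)), b̃₂(α) = (α²(α+1)²(5c₂² - (4α-3)c₂ - 2α))/(4c₂(5c₂²-1)(c₂-1)), b₁(α) = (α(α+1)²(20c₂⁴ - (30α+20)c₂³ + (12α²+21α-4)c₂² + (-4α²+3α+4)c₂ - 2α(α+1)))/(4c₂(5c₂²-1)(c₂-1)), b₂(α) = -(α²(α+1)²(5c₂² - (4α+7)c₂ + 2α+2))/(4c₂(5c₂²-1)(c₂+1)). Then for all real α: -(1-v) + b̃₁ + b̃₂ + b₁ + b₂ = α, (1-v)/2 - b̃₁ - (1-c₂)b̃₂ + c₂b₂ = α²/2, -(1-v)/3 + b̃₁ + (1-c₂)²b̃₂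 + c₂²b₂ = α³/3, (1-v)/4 - b̃₁ - (1-c₂)³b̃₂ + c₂³b₂ = α⁴/4, and -(1-v)/5 + b̃₁ + (1-c₂)⁴b̃₂ + c₂⁴b₂ = α⁵/5. -/
lemma five_mul_sq_sub_one_ne_zero {c : ℝ} (hp : c ≠ 1 / Real.sqrt 5)
    (hn : c ≠ -(1 / Real.sqrt 5)) :
    5 * c ^ 2 - 1 ≠ 0 := by
  have hsq : (1 / Real.sqrt 5) ^ 2 = 1 / 5 := by
    rw [div_pow, one_pow, Real.sq_sqrt (by norm_num)]
  have hfactor : 5 * c ^ 2 - 1 = 5 * ((c - 1 / Real.sqrt 5) * (c + 1 / Real.sqrt 5)) := by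
    linear_combination (5 : ℝ) * hsq
  rw [hfactor]
  exact mul_ne_zero (by norm_num)
    (mul_ne_zero (sub_ne_zero.2 hp) fun h => hn (eq_neg_of_add_eq_zero_left h))

theorem stmt4_general (c₂ : ℝ) (h0 : c₂ ≠ 0) (h1 : c₂ ≠ 1)
    (hs5 : c₂ ≠ 1 / Real.sqrt 5) (hs5' : c₂ ≠ -(1 / Real.sqrt 5))
    (hm1 : c₂ ≠ -1) (α : ℝ) :
    (let v := -((α+1)^2 * ((10*α-5)*c₂^2 - 15*c₂*α^2 + (α+1)*(6*α^2-3*α+1))) /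
        (5*c₂^2 - 1);
    let tb1 := (α^2*(α+1) * (20*c₂^4 - (30*α+10)*c₂^3 + (12*α^2+3*α-13)*c₂^2
        + (4*α^2+11*α+3)*c₂ - 2*α*(α+1))) / (4*c₂*(5*c₂^2-1)*(c₂+1));
    let tb2 := (α^2*(α+1)^2 * (5*c₂^2 - (4*α-3)*c₂ - 2*α)) /
        (4*c₂*(5*c₂^2-1)*(c₂-1));
    let b1 := (α*(α+1)^2 * (20*c₂^4 - (30*α+20)*c₂^3 + (12*α^2+21*α-4)*c₂^2
        + (-4*α^2+3*α+4)*c₂ - 2*α*(α+1))) / (4*c₂*(5*c₂^2-1)*(c₂-1));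
    let b2 := -(α^2*(α+1)^2 * (5*c₂^2 - (4*α+7)*c₂ + 2*α+2)) /
        (4*c₂*(5*c₂^2-1)*(c₂+1));
    -(1 - v) + tb1 + tb2 + b1 + b2 = α ∧
    (1 - v)/2 - tb1 - (1-c₂)*tb2 + c₂*b2 = α^2/2 ∧
    -(1 - v)/3 + tb1 + (1-c₂)^2*tb2 + c₂^2*b2 = α^3/3 ∧
    (1 - v)/4 - tb1 - (1-c₂)^3*tb2 + c₂^3*b2 = α^4/4 ∧
    -(1 - v)/5 + tb1 + (1-c₂)^4*tb2 + c₂^4*b2 = α^5/5) := by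
  have h5 : 5 * c₂ ^ 2 - 1 ≠ 0 := five_mul_sq_sub_one_ne_zero hs5 hs5'
  have hsub : c₂ - 1 ≠ 0 := sub_ne_zero.2 h1
  have hadd : c₂ + 1 ≠ 0 := fun h => hm1 (eq_neg_of_add_eq_zero_left h)
  refine ⟨?_, ?_, ?_, ?_, ?_⟩ <;> · field_simp; ring

/-- Uniform order-five conditions Γₖ = 0, k = 1,...,5, for the 2-stage explicit
TSGLM with abscissae c₁ = 0 and general c₂, with the order-five family
coefficients v, b̃₁, b̃₂, b₁, b₂. -/
theorem stmt4 (c₂ : ℝ) (h0 : c₂ ≠ 0) (h1 : c₂ ≠ 1) (hhalf : c₂ ≠ 1/2)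
    (hs5 : c₂ ≠ 1 / Real.sqrt 5) (hs5' : c₂ ≠ -(1 / Real.sqrt 5))
    (hm1 : c₂ ≠ -1) (α : ℝ) :
    (let v := -((α+1)^2 * ((10*α-5)*c₂^2 - 15*c₂*α^2 + (α+1)*(6*α^2-3*α+1))) /
        (5*c₂^2 - 1);
    let tb1 := (α^2*(α+1) * (20*c₂^4 - (30*α+10)*c₂^3 + (12*α^2+3*α-13)*c₂^2
        + (4*α^2+11*α+3)*c₂ - 2*α*(α+1))) / (4*c₂*(5*c₂^2-1)*(c₂+1));
    let tb2 := (α^2*(α+1)^2 * (5*c₂^2 - (4*α-3)*c₂ - 2*α)) /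
        (4*c₂*(5*c₂^2-1)*(c₂-1));
    let b1 := (α*(α+1)^2 * (20*c₂^4 - (30*α+20)*c₂^3 + (12*α^2+21*α-4)*c₂^2
        + (-4*α^2+3*α+4)*c₂ - 2*α*(α+1))) / (4*c₂*(5*c₂^2-1)*(c₂-1));
    let b2 := -(α^2*(α+1)^2 * (5*c₂^2 - (4*α+7)*c₂ + 2*α+2)) /
        (4*c₂*(5*c₂^2-1)*(c₂+1));
    -(1 - v) + tb1 + tb2 + b1 + b2 = α ∧
    (1 - v)/2 - tb1 - (1-c₂)*tb2 + c₂*b2 = α^2/2 ∧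
    -(1 - v)/3 + tb1 + (1-c₂)^2*tb2 + c₂^2*b2 = α^3/3 ∧
    (1 - v)/4 - tb1 - (1-c₂)^3*tb2 + c₂^3*b2 = α^4/4 ∧
    -(1 - v)/5 + tb1 + (1-c₂)^4*tb2 + c₂^4*b2 = α^5/5) :=
  stmt4_general c₂ h0 h1 hs5 hs5' hm1 α
end

section
/- Let c₂ be a real number with c₂ ∉ {0, 1, 1/2, -1}. Define u₂(α) = (α+1)²(1 - 2α + 3α²/(2c₂-1)), ã₂₁(α) = α²(α+1) - α²(α+1)²(3c₂-1)/(2c₂(2c₂-1)), ã₂₂(α) = α²(α+1)²/(2c₂(c₂-1)(2c₂-1)), a₂₁(α) = α(α+1)²(1 - α(3c₂-2)/(2(2c₂-1)(c₂-1))). Then for all real α: -(1-u₂) + ã₂₁ + ã₂₂ + a₂₁ = α, (1-u₂)/2 - ã₂₁ - (1-c₂)ã₂₂ = α²/2, -(1-u₂)/3 + ã₂₁ + (1-c₂)²ã₂₂ = α³/3, and (1-u₂)/4 - ã₂₁ - (1-c₂)³ã₂₂ = α⁴/4. -/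
theorem stmt5_general (c₂ : ℝ) (h0 : c₂ ≠ 0) (h1 : c₂ ≠ 1) (hhalf : c₂ ≠ 1/2)
    (α : ℝ) :
    (let u₂ := (α+1)^2 * (1 - 2*α + 3*α^2/(2*c₂-1));
    let ta21 := α^2*(α+1) - α^2*(α+1)^2*(3*c₂-1)/(2*c₂*(2*c₂-1));
    let ta22 := α^2*(α+1)^2 / (2*c₂*(c₂-1)*(2*c₂-1));
    let a21 := α*(α+1)^2 * (1 - α*(3*c₂-2)/(2*(2*c₂-1)*(c₂-1)));
    -(1 - u₂) + ta21 + ta22 + a21 = α ∧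
    (1 - u₂)/2 - ta21 - (1-c₂)*ta22 = α^2/2 ∧
    -(1 - u₂)/3 + ta21 + (1-c₂)^2*ta22 = α^3/3 ∧
    (1 - u₂)/4 - ta21 - (1-c₂)^3*ta22 = α^4/4) := by
  have h2c₂ : 2*c₂ - 1 ≠ 0 := by contrapose! hhalf; linarith
  have hc₂1 : c₂ - 1 ≠ 0 := sub_ne_zero.mpr h1
  refine ⟨?_, ?_, ?_, ?_⟩ <;> field_simp <;> ring

/-- Uniform stage order-four conditions Γ₂ₖ = 0, k = 1,...,4, for the second
stage of the 2-stage explicit TSGLM with c₁ = 0 and general c₂, with the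
order-five family coefficients u₂, ã₂₁, ã₂₂, a₂₁. -/
theorem stmt5 (c₂ : ℝ) (h0 : c₂ ≠ 0) (h1 : c₂ ≠ 1) (hhalf : c₂ ≠ 1/2)
    (hm1 : c₂ ≠ -1) (α : ℝ) :
    (let u₂ := (α+1)^2 * (1 - 2*α + 3*α^2/(2*c₂-1));
    let ta21 := α^2*(α+1) - α^2*(α+1)^2*(3*c₂-1)/(2*c₂*(2*c₂-1));
    let ta22 := α^2*(α+1)^2 / (2*c₂*(c₂-1)*(2*c₂-1));
    let a21 := α*(α+1)^2 * (1 - α*(3*c₂-2)/(2*(2*c₂-1)*(c₂-1)));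
    -(1 - u₂) + ta21 + ta22 + a21 = α ∧
    (1 - u₂)/2 - ta21 - (1-c₂)*ta22 = α^2/2 ∧
    -(1 - u₂)/3 + ta21 + (1-c₂)^2*ta22 = α^3/3 ∧
    (1 - u₂)/4 - ta21 - (1-c₂)^3*ta22 = α^4/4) :=
  stmt5_general c₂ h0 h1 hhalf α
end

section
/- With the coefficients of the uniform order-five 2-stage method (c₁ = 0, u₂, ã₂₁, ã₂₂ as in the order-five family depending on c₂), the equation Γ₂₅(1) = 0, i.e. -(1-u₂(1))/5 + ã₂₁(1) + (1-c₂)⁴ã₂₂(1) = 1/5, has c₂ = (11-√41)/10 as a solution. -/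
/-!
Clearing denominators, `Γ₂₅(1)` is a rational function of `c₂` whose numerator is the quadratic
`5 c₂² - 11 c₂ + 4`, with roots `(11 ± √41) / 10`. The smaller root lies in `(2/5, 1/2)`, away
from the poles `0, 1/2, 1` of the coefficients.
-/

noncomputable section

namespace OrderFiveTwoStage

def u₂ (c α : ℝ) : ℝ := (α + 1) ^ 2 * (1 - 2 * α + 3 * α ^ 2 / (2 * c - 1))

def a₂₁ (c α : ℝ) : ℝ :=
  α ^ 2 * (α + 1) - α ^ 2 * (α + 1) ^ 2 * (3 * c - 1) / (2 * c * (2 * c - 1))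

def a₂₂ (c α : ℝ) : ℝ := α ^ 2 * (α + 1) ^ 2 / (2 * c * (c - 1) * (2 * c - 1))

theorem order_five_defect_at_one {c : ℝ} (hc₀ : c ≠ 0) (hc₁ : c - 1 ≠ 0) (hc : 2 * c - 1 ≠ 0) :
    -(1 - u₂ c 1) / 5 + a₂₁ c 1 + (1 - c) ^ 4 * a₂₂ c 1 - 1 / 5
      = 2 * (5 * c ^ 2 - 11 * c + 4) / (5 * (2 * c - 1)) := by
  unfold u₂ a₂₁ a₂₂
  field_simp
  ring

theorem quadratic_eq_zero_of_eq_sqrt_41 {c : ℝ} (hc : c = (11 - √41) / 10) :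
    5 * c ^ 2 - 11 * c + 4 = 0 := by
  subst hc
  linear_combination (1 / 20 : ℝ) * Real.sq_sqrt (show (0 : ℝ) ≤ 41 by norm_num)

theorem mem_Ioo_of_eq_sqrt_41 {c : ℝ} (hc : c = (11 - √41) / 10) : c ∈ Set.Ioo (2 / 5) (1 / 2) := by
  have h₆ : (6 : ℝ) < √41 := by
    rw [Real.lt_sqrt (by norm_num)]; norm_num
  have h₇ : √41 < 7 := by
    rw [Real.sqrt_lt' (by norm_num)]; norm_num
  constructor <;> linarith

end OrderFiveTwoStage

end

open OrderFiveTwoStage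

/-- The equation Γ₂₅(1) = 0, i.e. -(1-u₂(1))/5 + ã₂₁(1) + (1-c₂)⁴ã₂₂(1) = 1/5,
for the order-five family has c₂ = (11-√41)/10 as a solution. -/
theorem stmt6 :
    (let c₂ : ℝ := (11 - Real.sqrt 41) / 10;
    let u₂ : ℝ := ((1:ℝ)+1)^2 * (1 - 2*1 + 3*(1:ℝ)^2/(2*c₂-1));
    let ta21 : ℝ := (1:ℝ)^2*((1:ℝ)+1) - (1:ℝ)^2*((1:ℝ)+1)^2*(3*c₂-1)/(2*c₂*(2*c₂-1));
    let ta22 : ℝ := (1:ℝ)^2*((1:ℝ)+1)^2 / (2*c₂*(c₂-1)*(2*c₂-1));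
    -(1 - u₂)/5 + ta21 + (1-c₂)^4 * ta22 = 1/5) := by
  intro c₂ _ _ _
  have hc₂ : c₂ = (11 - √41) / 10 := rfl
  obtain ⟨hlo, hhi⟩ := mem_Ioo_of_eq_sqrt_41 hc₂
  change -(1 - u₂ c₂ 1) / 5 + a₂₁ c₂ 1 + (1 - c₂) ^ 4 * a₂₂ c₂ 1 = 1 / 5
  rw [← sub_eq_zero, order_five_defect_at_one (by linarith) (by linarith) (by linarith),
    quadratic_eq_zero_of_eq_sqrt_41 hc₂, mul_zero, zero_div]
end

section
/- For c₂ = (11-√41)/10, the quantity Γ₆(1) (in the paper's normalization, i.e. without the factorial factor) equals -16(17-2√41)/(75(71-11√41)), and this value is nonzero; hence discrete order six is unattainable for the 2-stage explicit order-five method. -/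
/-!
c₂ = (11 - √41)/10 is a root of 5c² - 11c + 4, which is the numerator of b₂ at α = 1.
Reducing every coefficient modulo this quadratic makes it affine in c₂, and Γ₆(1)
collapses to (18c₂ - 32)/15. This cannot vanish, since 16/9 is not a root of the quadratic.
-/

namespace OrderFiveFamily

noncomputable section

variable (α c : ℝ)

def v : ℝ := -((α+1)^2 * ((10*α-5)*c^2 - 15*c*α^2 + (α+1)*(6*α^2-3*α+1))) / (5*c^2 - 1)

-- `tb1`, `tb2` are the paper's `b̃₁`, `b̃₂`.
def tb1 : ℝ := (α^2*(α+1) * (20*c^4 - (30*α+10)*c^3 + (12*α^2+3*α-13)*c^2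
    + (4*α^2+11*α+3)*c - 2*α*(α+1))) / (4*c*(5*c^2-1)*(c+1))

def tb2 : ℝ := (α^2*(α+1)^2 * (5*c^2 - (4*α-3)*c - 2*α)) / (4*c*(5*c^2-1)*(c-1))

def b2 : ℝ := -(α^2*(α+1)^2 * (5*c^2 - (4*α+7)*c + 2*α+2)) / (4*c*(5*c^2-1)*(c+1))

def gamma6AtOne : ℝ :=
  (1 - v 1 c)*(-1)^6/6 + tb1 1 c*(-1)^5 + tb2 1 c*(-(1-c))^5 + b2 1 c*c^5 - 1/6

variable {c}

section Root

variable (hc : 5*c^2 - 11*c + 4 = 0)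
include hc

theorem ne_zero_of_root : c ≠ 0 := by
  rintro rfl
  norm_num at hc

theorem five_mul_sq_sub_one_ne_zero_of_root : 5*c^2 - 1 ≠ 0 := by
  intro h
  obtain rfl : c = 5/11 := by linarith
  norm_num at h

theorem add_one_ne_zero_of_root : c + 1 ≠ 0 := by
  intro h
  obtain rfl : c = -1 := by linarith
  norm_num at hc

theorem sub_one_ne_zero_of_root : c - 1 ≠ 0 := by
  intro h
  obtain rfl : c = 1 := by linarith
  norm_num at hc

theorem v_one_of_root : v 1 c = 120*c - 208 := by
  rw [v, div_eq_iff (five_mul_sq_sub_one_ne_zero_of_root hc)]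
  linear_combination (-60 - 120*c) * hc

theorem tb1_one_of_root : tb1 1 c = (61 - 35*c)/2 := by
  have hd := mul_ne_zero (mul_ne_zero (mul_ne_zero four_ne_zero (ne_zero_of_root hc))
    (five_mul_sq_sub_one_ne_zero_of_root hc)) (add_one_ne_zero_of_root hc)
  rw [tb1, div_eq_iff hd]
  linear_combination (-2 + 34*c + 110*c^2 + 70*c^3) * hc

theorem tb2_one_of_root : tb2 1 c = (271 - 155*c)/2 := by
  have hd := mul_ne_zero (mul_ne_zero (mul_ne_zero four_ne_zero (ne_zero_of_root hc))
    (five_mul_sq_sub_one_ne_zero_of_root hc)) (sub_one_ne_zero_of_root hc)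
  rw [tb2, div_eq_iff hd]
  linear_combination (-2 - 142*c - 170*c^2 + 310*c^3) * hc

theorem b2_one_of_root : b2 1 c = 0 := by
  rw [b2, neg_div, neg_eq_zero, div_eq_zero_iff]
  left
  linear_combination 4 * hc

theorem gamma6AtOne_of_root : gamma6AtOne c = (18*c - 32)/15 := by
  rw [gamma6AtOne, v_one_of_root hc, tb1_one_of_root hc, tb2_one_of_root hc,
    b2_one_of_root hc]
  linear_combination (-323/10 + 99*c - 123*c^2 + 141/2*c^3 - 31/2*c^4) * hc

theorem gamma6AtOne_ne_zero_of_root : gamma6AtOne c ≠ 0 := by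
  rw [gamma6AtOne_of_root hc]
  intro h
  obtain rfl : c = 16/9 := by linarith
  norm_num at hc

end Root

end

end OrderFiveFamily

open OrderFiveFamily in
/-- For c₂ = (11-√41)/10, the quantity Γ₆(1) (without the factorial factor)
for the order-five family equals -16(17-2√41)/(75(71-11√41)), which is nonzero;
hence discrete order six is unattainable. -/
theorem stmt7 :
    (let c₂ : ℝ := (11 - Real.sqrt 41) / 10;
    let α : ℝ := 1;
    let v : ℝ := -((α+1)^2 * ((10*α-5)*c₂^2 - 15*c₂*α^2 + (α+1)*(6*α^2-3*α+1))) /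
        (5*c₂^2 - 1);
    let tb1 : ℝ := (α^2*(α+1) * (20*c₂^4 - (30*α+10)*c₂^3 + (12*α^2+3*α-13)*c₂^2
        + (4*α^2+11*α+3)*c₂ - 2*α*(α+1))) / (4*c₂*(5*c₂^2-1)*(c₂+1));
    let tb2 : ℝ := (α^2*(α+1)^2 * (5*c₂^2 - (4*α-3)*c₂ - 2*α)) /
        (4*c₂*(5*c₂^2-1)*(c₂-1));
    let b2 : ℝ := -(α^2*(α+1)^2 * (5*c₂^2 - (4*α+7)*c₂ + 2*α+2)) /
        (4*c₂*(5*c₂^2-1)*(c₂+1));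
    let Γ6 : ℝ := (1 - v)*(-1)^6/6 + tb1*(-1)^5 + tb2*(-(1-c₂))^5 + b2*c₂^5 - 1/6;
    Γ6 = -16*(17 - 2*Real.sqrt 41) / (75*(71 - 11*Real.sqrt 41)) ∧ Γ6 ≠ 0) := by
  show gamma6AtOne ((11 - √41)/10) = _ ∧ gamma6AtOne ((11 - √41)/10) ≠ 0
  have h41 : √41 ^ 2 = 41 := Real.sq_sqrt (by norm_num)
  have hroot : 5*((11 - √41)/10)^2 - 11*((11 - √41)/10) + 4 = 0 := by
    linear_combination (1/20) * h41
  have hden : 75*(71 - 11*√41) ≠ 0 := by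
    refine mul_ne_zero (by norm_num) fun h ↦ ?_
    obtain h' : √41 = 71/11 := by linarith
    rw [h'] at h41
    norm_num at h41
  refine ⟨?_, gamma6AtOne_ne_zero_of_root hroot⟩
  rw [gamma6AtOne_of_root hroot, eq_div_iff hden]
  linear_combination 99 * h41
end

section
/- Let y : ℝ → ℝ be (p̃+1)-times continuously differentiable. For the stage-error function Ẽ(αh) := (1-u(α))y(-h) + u(α)y(0) + h Σⱼ ãⱼ(α)y'(-h+cⱼh) + h Σⱼ aⱼ(α)y'(cⱼh) - y(αh), if Γₖ(α) = 0 for all α ∈ [0,c] and k = 1,...,p̃ (where Γₖ(α) = (1/(k-1)!)[(1-u(α))(-1)ᵏ/k + Σⱼ ãⱼ(α)(-(1-cⱼ))^{k-1} + Σⱼ aⱼ(α)cⱼ^{k-1} - αᵏ/k]), then there exist D > 0 and H > 0 such that |Ẽ(αh)| ≤ D·h^{p̃+1} for all α ∈ [0,c] and h ∈ [0,H]. -/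
/-- The quantity Γₖ(α) for a stage of a two-step GLM with polynomial
coefficient functions u, ãⱼ, aⱼ and abscissae cⱼ. -/
noncomputable def stageGamma (s : ℕ) (cj : Fin s → ℝ) (u : Polynomial ℝ)
    (ta a : Fin s → Polynomial ℝ) (k : ℕ) (α : ℝ) : ℝ :=
  (1 / (Nat.factorial (k - 1) : ℝ)) *
    ((1 - u.eval α) * (-1) ^ k / k
      + ∑ j, (ta j).eval α * (-(1 - cj j)) ^ (k - 1)
      + ∑ j, (a j).eval α * (cj j) ^ (k - 1)
      - α ^ k / k)

/-- The stage-error function Ẽ(αh) of a two-step GLM stage applied to a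
function y. -/
noncomputable def stageError (s : ℕ) (cj : Fin s → ℝ) (u : Polynomial ℝ)
    (ta a : Fin s → Polynomial ℝ) (y : ℝ → ℝ) (h α : ℝ) : ℝ :=
  (1 - u.eval α) * y (-h) + u.eval α * y 0
    + h * ∑ j, (ta j).eval α * deriv y (-h + cj j * h)
    + h * ∑ j, (a j).eval α * deriv y (cj j * h)
    - y (α * h)

/-!
Ẽ is linear in the pair `(y, y')` once `y'` is decoupled from `y`. Write `y = T + R` with `T` the
Taylor polynomial of degree `p̃` at `0`. On the monomial `x ^ k / k!` (with derivative
`x ^ (k-1) / (k-1)!`) Ẽ equals `h ^ k Γₖ(α)`, so the polynomial part contributes nothing. Ẽ only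
samples `R` and `R'` at points of size `O(h)`, where Taylor's theorem gives `R = O(h ^ (p̃+1))` and
`R' = O(h ^ p̃)`; the coefficients `u, ãⱼ, aⱼ` are bounded on `[0, c]` by compactness.
-/

open Finset Filter Topology Asymptotics
open scoped Nat

noncomputable section

def taylorAtZero (f : ℝ → ℝ) (n : ℕ) (x : ℝ) : ℝ :=
  ∑ k ∈ range n, iteratedDeriv k f 0 * x ^ k / k !

theorem isBigO_sub_taylorAtZero {f : ℝ → ℝ} {n : ℕ} (hf : ContDiff ℝ n f) :
    (fun x ↦ f x - taylorAtZero f n x) =O[𝓝 0] fun x ↦ x ^ n := by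
  have hsplit : ∀ x, f x - taylorAtZero f n x =
      (f x - taylorWithinEval f n Set.univ 0 x) + iteratedDeriv n f 0 / n ! * x ^ n := by
    intro x
    simp only [taylor_within_apply, iteratedDerivWithin_univ, sub_zero, smul_eq_mul,
      sum_range_succ, taylorAtZero]
    have : ∀ k ∈ range n, ((k ! : ℝ))⁻¹ * x ^ k * iteratedDeriv k f 0
        = iteratedDeriv k f 0 * x ^ k / k ! := fun k _ ↦ by ring
    rw [sum_congr rfl this]
    ring
  simp_rw [hsplit]
  simpa using (taylor_isLittleO_univ (x₀ := 0) hf).isBigO.add (isBigO_const_mul_self _ _ _)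

theorem exists_abs_sub_taylorAtZero_le {f : ℝ → ℝ} {n : ℕ} (hf : ContDiff ℝ n f) :
    ∃ C > 0, ∃ δ > 0, ∀ x, |x| ≤ δ → |f x - taylorAtZero f n x| ≤ C * |x| ^ n := by
  obtain ⟨C, hC, hO⟩ := (isBigO_sub_taylorAtZero hf).exists_pos
  obtain ⟨ε, hε, hball⟩ := Metric.eventually_nhds_iff.mp hO.bound
  refine ⟨C, hC, ε / 2, half_pos hε, fun x hx ↦ ?_⟩
  simpa using hball (show dist x 0 < ε by rw [Real.dist_0_eq_abs]; linarith)

theorem taylorAtZero_pair_eq (f : ℝ → ℝ) (n : ℕ) :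
    (taylorAtZero f (n + 1), taylorAtZero (deriv f) n)
      = f 0 • ((fun _ ↦ 1, 0) : (ℝ → ℝ) × (ℝ → ℝ)) + ∑ k ∈ range n, iteratedDeriv (k + 1) f 0 •
          ((fun x ↦ x ^ (k + 1) / (k + 1)!, fun x ↦ x ^ k / k !) : (ℝ → ℝ) × (ℝ → ℝ)) := by
  ext x
  · simp only [Prod.fst_add, Prod.smul_fst, Prod.fst_sum, Pi.add_apply, Pi.smul_apply,
      Finset.sum_apply, smul_eq_mul, taylorAtZero, sum_range_succ']
    simp [mul_div_assoc, add_comm]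
  · simp only [Prod.snd_add, Prod.smul_snd, Prod.snd_sum, Pi.add_apply, Pi.smul_apply,
      Finset.sum_apply, smul_eq_mul, taylorAtZero, iteratedDeriv_succ']
    simp [mul_div_assoc]

theorem abs_sum_mul_le {ι : Type*} (t : Finset ι) (b g : ι → ℝ) {B : ℝ}
    (hg : ∀ i ∈ t, |g i| ≤ B) :
    |∑ i ∈ t, b i * g i| ≤ (∑ i ∈ t, |b i|) * B := by
  rw [sum_mul]
  refine (abs_sum_le_sum_abs _ _).trans (sum_le_sum fun i hi ↦ ?_)
  rw [abs_mul]
  exact mul_le_mul_of_nonneg_left (hg i hi) (abs_nonneg _)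

section StageForm

variable {s : ℕ} (cj : Fin s → ℝ) (u : Polynomial ℝ) (ta a : Fin s → Polynomial ℝ) (h α : ℝ)

/-- `stageError` with the derivative slot decoupled from `y`, which makes it linear. -/
def stageForm : (ℝ → ℝ) × (ℝ → ℝ) →ₗ[ℝ] ℝ where
  toFun F := (1 - u.eval α) * F.1 (-h) + u.eval α * F.1 0
    + h * ∑ j, (ta j).eval α * F.2 (-h + cj j * h)
    + h * ∑ j, (a j).eval α * F.2 (cj j * h)
    - F.1 (α * h)
  map_add' F G := by
    simp only [Prod.fst_add, Prod.snd_add, Pi.add_apply, mul_add, sum_add_distrib]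
    ring
  map_smul' r F := by
    simp only [Prod.smul_fst, Prod.smul_snd, Pi.smul_apply, smul_eq_mul, RingHom.id_apply,
      mul_sum]
    simp only [mul_left_comm _ r, ← mul_sum]
    ring

theorem stageError_eq_stageForm (y : ℝ → ℝ) :
    stageError s cj u ta a y h α = stageForm cj u ta a h α (y, deriv y) := rfl

theorem stageForm_one : stageForm cj u ta a h α (fun _ ↦ 1, 0) = 0 := by
  simp [stageForm]

theorem stageForm_monomial (k : ℕ) :
    stageForm cj u ta a h α (fun x ↦ x ^ (k + 1) / (k + 1)!, fun x ↦ x ^ k / k !)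
      = h ^ (k + 1) * stageGamma s cj u ta a (k + 1) α := by
  have hsum : ∀ (b e : Fin s → ℝ), h * ∑ j, b j * ((e j * h) ^ k / k !)
      = h ^ (k + 1) / k ! * ∑ j, b j * e j ^ k := fun b e ↦ by
    rw [mul_sum, mul_sum]; exact sum_congr rfl fun j _ ↦ by ring
  have hnode : ∀ j, -h + cj j * h = -(1 - cj j) * h := fun j ↦ by ring
  simp only [stageForm, stageGamma, LinearMap.coe_mk, AddHom.coe_mk, hnode, hsum,
    Nat.add_sub_cancel, Nat.factorial_succ]
  push_cast
  field_simp
  ring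

theorem stageForm_taylorAtZero (f : ℝ → ℝ) (n : ℕ) :
    stageForm cj u ta a h α (taylorAtZero f (n + 1), taylorAtZero (deriv f) n)
      = ∑ k ∈ range n,
          iteratedDeriv (k + 1) f 0 * (h ^ (k + 1) * stageGamma s cj u ta a (k + 1) α) := by
  simp only [taylorAtZero_pair_eq, map_add, map_sum, map_smul, stageForm_one, stageForm_monomial,
    mul_zero, zero_add, smul_eq_mul]

theorem stageError_eq_stageForm_sub_taylorAtZero {y : ℝ → ℝ} {p : ℕ}
    (hΓ : ∀ k, 1 ≤ k → k ≤ p → stageGamma s cj u ta a k α = 0) :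
    stageError s cj u ta a y h α = stageForm cj u ta a h α
      ((y, deriv y) - (taylorAtZero y (p + 1), taylorAtZero (deriv y) p)) := by
  rw [stageError_eq_stageForm, map_sub, stageForm_taylorAtZero, sum_eq_zero, sub_zero]
  intro k hk
  rw [hΓ (k + 1) (by omega) (by simpa using hk), mul_zero, mul_zero]

theorem abs_stageForm_le (hcj : ∀ j, cj j ∈ Set.Icc (0 : ℝ) 1) {M A B : ℝ} (hh : 0 ≤ h)
    (hα : α ∈ Set.Icc 0 M) (hM : 1 ≤ M) {F : (ℝ → ℝ) × (ℝ → ℝ)}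
    (hA : ∀ x, |x| ≤ M * h → |F.1 x| ≤ A) (hB : ∀ x, |x| ≤ h → |F.2 x| ≤ B) :
    |stageForm cj u ta a h α F|
      ≤ (|1 - u.eval α| + |u.eval α| + 1) * A
        + h * (∑ j, |(ta j).eval α| + ∑ j, |(a j).eval α|) * B := by
  have hMh : h ≤ M * h := le_mul_of_one_le_left hh hM
  have hnode : ∀ j, |cj j * h| ≤ h ∧ |-h + cj j * h| ≤ h := fun j ↦ by
    obtain ⟨h0, h1⟩ := hcj j
    constructor <;> rw [abs_le] <;> constructor <;> nlinarith
  have t₁ : |(1 - u.eval α) * F.1 (-h)| ≤ |1 - u.eval α| * A := by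
    rw [abs_mul]
    exact mul_le_mul_of_nonneg_left (hA _ (by rwa [abs_neg, abs_of_nonneg hh])) (abs_nonneg _)
  have t₂ : |u.eval α * F.1 0| ≤ |u.eval α| * A := by
    rw [abs_mul]
    exact mul_le_mul_of_nonneg_left (hA _ (by simpa using hh.trans hMh)) (abs_nonneg _)
  have t₃ : |h * ∑ j, (ta j).eval α * F.2 (-h + cj j * h)|
      ≤ h * ((∑ j, |(ta j).eval α|) * B) := by
    rw [abs_mul, abs_of_nonneg hh]
    exact mul_le_mul_of_nonneg_left (abs_sum_mul_le _ _ _ fun j _ ↦ hB _ (hnode j).2) hh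
  have t₄ : |h * ∑ j, (a j).eval α * F.2 (cj j * h)| ≤ h * ((∑ j, |(a j).eval α|) * B) := by
    rw [abs_mul, abs_of_nonneg hh]
    exact mul_le_mul_of_nonneg_left (abs_sum_mul_le _ _ _ fun j _ ↦ hB _ (hnode j).1) hh
  have t₅ : |F.1 (α * h)| ≤ A :=
    hA _ (by rw [abs_of_nonneg (mul_nonneg hα.1 hh)]; exact mul_le_mul_of_nonneg_right hα.2 hh)
  simp only [stageForm, LinearMap.coe_mk, AddHom.coe_mk]
  rw [abs_le] at t₁ t₂ t₃ t₄ t₅ ⊢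
  constructor <;> linarith

theorem exists_stageCoeff_bound (c : ℝ) : ∃ K, ∀ α ∈ Set.Icc 0 c,
    |1 - u.eval α| + |u.eval α| + 1 ≤ K ∧ ∑ j, |(ta j).eval α| + ∑ j, |(a j).eval α| ≤ K := by
  obtain ⟨K, hK⟩ := (isCompact_Icc (a := (0 : ℝ)) (b := c)).bddAbove_image
    (f := fun α ↦ (|1 - u.eval α| + |u.eval α| + 1) + (∑ j, |(ta j).eval α| + ∑ j, |(a j).eval α|))
    (by fun_prop)
  refine ⟨K, fun α hα ↦ ?_⟩
  have hKα := hK ⟨α, hα, rfl⟩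
  have hsum : 0 ≤ ∑ j, |(ta j).eval α| + ∑ j, |(a j).eval α| := by positivity
  constructor <;> linarith [abs_nonneg (1 - u.eval α), abs_nonneg (u.eval α)]

end StageForm

end

theorem stmt9_general (s : ℕ) (c : ℝ) (cj : Fin s → ℝ)
    (hcj : ∀ j, cj j ∈ Set.Icc (0:ℝ) 1)
    (u : Polynomial ℝ) (ta a : Fin s → Polynomial ℝ) (p : ℕ)
    (y : ℝ → ℝ) (hy : ContDiff ℝ (p + 1) y)
    (hΓ : ∀ α ∈ Set.Icc 0 c, ∀ k, 1 ≤ k → k ≤ p →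
      stageGamma s cj u ta a k α = 0) :
    ∃ D > (0:ℝ), ∃ H > (0:ℝ), ∀ α ∈ Set.Icc 0 c, ∀ h ∈ Set.Icc (0:ℝ) H,
      |stageError s cj u ta a y h α| ≤ D * h ^ (p + 1) := by
  obtain ⟨C₁, hC₁, δ₁, hδ₁, hy₁⟩ := exists_abs_sub_taylorAtZero_le (n := p + 1) (mod_cast hy)
  obtain ⟨C₂, hC₂, δ₂, hδ₂, hy₂⟩ :=
    exists_abs_sub_taylorAtZero_le (contDiff_succ_iff_deriv.mp hy).2.2
  obtain ⟨K, hK⟩ := exists_stageCoeff_bound u ta a c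
  set M := max 1 c
  have hM : 1 ≤ M := le_max_left _ _
  refine ⟨|K| * (C₁ * M ^ (p + 1) + C₂) + 1, by positivity, min δ₁ δ₂ / M, by positivity,
    fun α hα h hh ↦ ?_⟩
  obtain ⟨h0, hhH⟩ := hh
  have hMh : M * h ≤ min δ₁ δ₂ := (le_div_iff₀' (by positivity)).mp hhH
  have hhM : h ≤ M * h := le_mul_of_one_le_left h0 hM
  have hA : ∀ x, |x| ≤ M * h → |y x - taylorAtZero y (p + 1) x| ≤ C₁ * (M * h) ^ (p + 1) :=
    fun x hx ↦ (hy₁ x (hx.trans (hMh.trans (min_le_left _ _)))).trans (by gcongr)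
  have hB : ∀ x, |x| ≤ h → |deriv y x - taylorAtZero (deriv y) p x| ≤ C₂ * h ^ p :=
    fun x hx ↦ (hy₂ x (hx.trans (hhM.trans (hMh.trans (min_le_right _ _))))).trans (by gcongr)
  obtain ⟨hK₁, hK₂⟩ := hK α hα
  rw [stageError_eq_stageForm_sub_taylorAtZero cj u ta a h α (hΓ α hα)]
  calc _ ≤ (|1 - u.eval α| + |u.eval α| + 1) * (C₁ * (M * h) ^ (p + 1))
        + h * (∑ j, |(ta j).eval α| + ∑ j, |(a j).eval α|) * (C₂ * h ^ p) :=
        abs_stageForm_le cj u ta a h α hcj h0 ⟨hα.1, hα.2.trans (le_max_right _ _)⟩ hM hA hB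
    _ ≤ |K| * (C₁ * (M * h) ^ (p + 1)) + h * |K| * (C₂ * h ^ p) := by
        gcongr <;> linarith [le_abs_self K]
    _ = |K| * (C₁ * M ^ (p + 1) + C₂) * h ^ (p + 1) := by ring
    _ ≤ _ := by gcongr; linarith

/-- If y is (p̃+1)-times continuously differentiable and Γₖ vanishes on [0,c]
for k = 1,...,p̃, then the stage error is bounded by D·h^{p̃+1} uniformly for
α ∈ [0,c] and h ∈ [0,H]. -/
theorem stmt9 (s : ℕ) (c : ℝ) (hc : 0 ≤ c) (cj : Fin s → ℝ)
    (hcj : ∀ j, cj j ∈ Set.Icc (0:ℝ) 1)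
    (u : Polynomial ℝ) (ta a : Fin s → Polynomial ℝ) (p : ℕ)
    (y : ℝ → ℝ) (hy : ContDiff ℝ (p + 1) y)
    (hΓ : ∀ α ∈ Set.Icc 0 c, ∀ k, 1 ≤ k → k ≤ p →
      stageGamma s cj u ta a k α = 0) :
    ∃ D > (0:ℝ), ∃ H > (0:ℝ), ∀ α ∈ Set.Icc 0 c, ∀ h ∈ Set.Icc (0:ℝ) H,
      |stageError s cj u ta a y h α| ≤ D * h ^ (p + 1) :=
  stmt9_general s c cj hcj u ta a p y hy hΓ
end

section
/- Conversely, suppose the polynomial coefficient functions u, ãⱼ, aⱼ on [0,c] are such that for every (p̃+1)-times continuously differentiable y the stage error satisfies Ẽ(αh) = O(h^{p̃+1}) uniformly in α ∈ [0,c]. Then Γₖ(α) = 0 for all α ∈ [0,c] and all k = 1,...,p̃. -/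
open Filter Topology Set Finset Nat

theorem eq_zero_of_abs_mul_pow_le {T D H : ℝ} {k n : ℕ} (hH : 0 < H) (hkn : k < n)
    (hb : ∀ h ∈ Icc 0 H, |T * h ^ k| ≤ D * h ^ n) : T = 0 := by
  have hle : ∀ h ∈ Ioc 0 H, |T| ≤ D * h ^ (n - k) := fun h ⟨h0, hhH⟩ => by
    have hk : 0 < h ^ k := pow_pos h0 k
    have := hb h ⟨h0.le, hhH⟩
    rw [abs_mul, abs_of_pos hk, ← Nat.sub_add_cancel hkn.le, pow_add, ← mul_assoc] at this
    exact le_of_mul_le_mul_right this hk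
  have hlim : Tendsto (fun h : ℝ => D * h ^ (n - k)) (𝓝[>] 0) (𝓝 0) := by
    have : Tendsto (fun h : ℝ => D * h ^ (n - k)) (𝓝 0) (𝓝 (D * 0 ^ (n - k))) :=
      (continuous_const.mul (continuous_pow _)).tendsto 0
    rw [zero_pow (Nat.sub_ne_zero_of_lt hkn), mul_zero] at this
    exact this.mono_left nhdsWithin_le_nhds
  have hT : |T| ≤ 0 := ge_of_tendsto hlim <| by
    filter_upwards [Ioc_mem_nhdsGT hH] using hle
  exact abs_nonpos_iff.mp hT

theorem stageError_pow (s : ℕ) (cj : Fin s → ℝ) (u : Polynomial ℝ)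
    (ta a : Fin s → Polynomial ℝ) {k : ℕ} (hk : k ≠ 0) (h α : ℝ) :
    stageError s cj u ta a (· ^ k) h α = k ! * stageGamma s cj u ta a k α * h ^ k := by
  obtain ⟨m, rfl⟩ := Nat.exists_eq_add_one_of_ne_zero hk
  have hderiv (x : ℝ) : deriv (· ^ (m + 1)) x = (m + 1) * x ^ m := by simp
  have hta : h * ∑ j, (ta j).eval α * deriv (· ^ (m + 1)) (-h + cj j * h)
      = (m + 1) * h ^ (m + 1) * ∑ j, (ta j).eval α * (-(1 - cj j)) ^ m := by
    simp only [hderiv, mul_sum]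
    refine sum_congr rfl fun j _ => ?_
    rw [show -h + cj j * h = -(1 - cj j) * h by ring, mul_pow]
    ring
  have ha : h * ∑ j, (a j).eval α * deriv (· ^ (m + 1)) (cj j * h)
      = (m + 1) * h ^ (m + 1) * ∑ j, (a j).eval α * cj j ^ m := by
    simp only [hderiv, mul_sum]
    refine sum_congr rfl fun j _ => ?_
    ring
  rw [stageError, hta, ha, stageGamma, Nat.add_sub_cancel, Nat.factorial_succ]
  push_cast
  field_simp
  ring

theorem stmt10_general (s : ℕ) (c : ℝ) (cj : Fin s → ℝ)
    (u : Polynomial ℝ) (ta a : Fin s → Polynomial ℝ) (p : ℕ)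
    (hbound : ∀ y : ℝ → ℝ, ContDiff ℝ (p + 1) y →
      ∃ D > (0:ℝ), ∃ H > (0:ℝ), ∀ α ∈ Set.Icc 0 c, ∀ h ∈ Set.Icc (0:ℝ) H,
        |stageError s cj u ta a y h α| ≤ D * h ^ (p + 1)) :
    ∀ α ∈ Set.Icc 0 c, ∀ k, 1 ≤ k → k ≤ p →
      stageGamma s cj u ta a k α = 0 := by
  intro α hα k hk hkp
  obtain ⟨D, -, H, hH, hb⟩ := hbound (· ^ k) (contDiff_id.pow k)
  have hk0 : k ≠ 0 := Nat.one_le_iff_ne_zero.mp hk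
  have hmonomial : k ! * stageGamma s cj u ta a k α = 0 :=
    eq_zero_of_abs_mul_pow_le hH (Nat.lt_succ_of_le hkp) fun h hh => by
      simpa only [stageError_pow s cj u ta a hk0] using hb α hα h hh
  exact (mul_eq_zero.mp hmonomial).resolve_left (by positivity)

/-- Conversely: if for every (p̃+1)-times continuously differentiable y the
stage error is O(h^{p̃+1}) uniformly in α ∈ [0,c], then Γₖ vanishes on [0,c]
for k = 1,...,p̃. -/
theorem stmt10 (s : ℕ) (c : ℝ) (hc : 0 ≤ c) (cj : Fin s → ℝ)
    (hcj : ∀ j, cj j ∈ Set.Icc (0:ℝ) 1)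
    (u : Polynomial ℝ) (ta a : Fin s → Polynomial ℝ) (p : ℕ)
    (hbound : ∀ y : ℝ → ℝ, ContDiff ℝ (p + 1) y →
      ∃ D > (0:ℝ), ∃ H > (0:ℝ), ∀ α ∈ Set.Icc 0 c, ∀ h ∈ Set.Icc (0:ℝ) H,
        |stageError s cj u ta a y h α| ≤ D * h ^ (p + 1)) :
    ∀ α ∈ Set.Icc 0 c, ∀ k, 1 ≤ k → k ≤ p →
      stageGamma s cj u ta a k α = 0 :=
  stmt10_general s c cj u ta a p hbound
end

section
/- Under the constraints of the order-four family with c₁ = 0, c₂ = 1 (system Γ₁=Γ₂=Γ₃=Γ₄=0 and Γ₂₁=Γ₂₂=Γ₂₃=0), the solution is unique up to the two free polynomial parameters ã₂₂ and b̃₂: any polynomial functions (u₂, v, ã₂₁, b̃₁, a₂₁, b₁, b₂) satisfying the seven identities of the system for all α ∈ ℝ must equal u₂(α) = -(2α-1)(α+1)², v(α) = (α-1)²(α+1)², ã₂₁(α) = α²(α+1), b̃₁(α) = -(1/12)α²(α+1)(5α-7), b₂(α) = (1/12)α²(α+1)², a₂₁(α) = α(α+1)² - ã₂₂(α), b₁(α)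 = -(1/3)α(2α-3)(α+1)² - b̃₂(α). -/
/-! For each fixed α the identities are a triangular linear system: Γ₂₂, Γ₂₃ give 1 - u₂ and
ã₂₁; Γ₂ - Γ₄ gives 1 - v, after which Γ₂, Γ₃ give b̃₁ and b₂; Γ₂₁ and Γ₁ then give a₂₁ and b₁. -/

section
variable {K : Type*} [Field K] [CharZero K]

theorem stage_coeffs_eq_of_order_conditions {u t x : K}
    (h₂ : (1 - u) / 2 - t = x ^ 2 / 2) (h₃ : -(1 - u) / 3 + t = x ^ 3 / 3) :
    u = -(2 * x - 1) * (x + 1) ^ 2 ∧ t = x ^ 2 * (x + 1) := by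
  have hu : u = 1 - 3 * x ^ 2 - 2 * x ^ 3 := by linear_combination (-6) * (h₂ + h₃)
  refine ⟨by rw [hu]; ring, ?_⟩
  linear_combination h₃ - hu / 3

theorem weights_eq_of_order_conditions {v s b x : K}
    (h₂ : (1 - v) / 2 - s + b = x ^ 2 / 2) (h₃ : -(1 - v) / 3 + s + b = x ^ 3 / 3)
    (h₄ : (1 - v) / 4 - s + b = x ^ 4 / 4) :
    v = (x - 1) ^ 2 * (x + 1) ^ 2 ∧ s = -(1 / 12) * x ^ 2 * (x + 1) * (5 * x - 7) ∧
      b = (1 / 12) * x ^ 2 * (x + 1) ^ 2 := by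
  have hv : v = 1 - 2 * x ^ 2 + x ^ 4 := by linear_combination (-4) * (h₂ - h₄)
  have hs : s = -(1 / 12) * x ^ 2 * (x + 1) * (5 * x - 7) := by
    linear_combination (h₃ - h₂) / 2 - 5 / 12 * hv
  refine ⟨by rw [hv]; ring, hs, ?_⟩
  linear_combination h₃ - hs - hv / 3

end

/-- Uniqueness of the order-four family with c₁ = 0, c₂ = 1: any coefficient
functions satisfying the seven identities Γ₁=Γ₂=Γ₃=Γ₄=0, Γ₂₁=Γ₂₂=Γ₂₃=0 for all
real α are given by the stated formulas, up to the free parameters ã₂₂, b̃₂. -/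
theorem stmt14 (u₂ v ta21 tb1 a21 b1 b2 ta22 tb2 : ℝ → ℝ)
    (h1 : ∀ α, -(1 - v α) + tb1 α + tb2 α + b1 α + b2 α = α)
    (h2 : ∀ α, (1 - v α)/2 - tb1 α + b2 α = α^2/2)
    (h3 : ∀ α, -(1 - v α)/3 + tb1 α + b2 α = α^3/3)
    (h4 : ∀ α, (1 - v α)/4 - tb1 α + b2 α = α^4/4)
    (h5 : ∀ α, -(1 - u₂ α) + ta21 α + ta22 α + a21 α = α)
    (h6 : ∀ α, (1 - u₂ α)/2 - ta21 α = α^2/2)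
    (h7 : ∀ α, -(1 - u₂ α)/3 + ta21 α = α^3/3) :
    ∀ α : ℝ,
      u₂ α = -(2*α - 1) * (α + 1)^2 ∧
      v α = (α - 1)^2 * (α + 1)^2 ∧
      ta21 α = α^2 * (α + 1) ∧
      tb1 α = -(1/12) * α^2 * (α + 1) * (5*α - 7) ∧
      b2 α = (1/12) * α^2 * (α + 1)^2 ∧
      a21 α = α * (α + 1)^2 - ta22 α ∧
      b1 α = -(1/3) * α * (2*α - 3) * (α + 1)^2 - tb2 α := by
  intro α
  obtain ⟨hu, hta⟩ := stage_coeffs_eq_of_order_conditions (h6 α) (h7 α)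
  obtain ⟨hv, htb, hb2⟩ := weights_eq_of_order_conditions (h2 α) (h3 α) (h4 α)
  refine ⟨hu, hv, hta, htb, hb2, ?_, ?_⟩
  · linear_combination h5 α - hu - hta
  · linear_combination h1 α - hv - htb - hb2
end

section
/- The number c₂ = (11-√41)/10 is a root of the quadratic 5c₂² - 11c₂ + 4 = 0, and conversely, under the order-five stage conditions, the requirement Γ₂₅(1) = 0 is equivalent (after clearing the nonzero denominators) to a polynomial equation in c₂ having 5c₂² - 11c₂ + 4 as a factor. -/
open Polynomial

/-! The quadratic formula gives the roots of `5c² - 11c + 4`, whose discriminant is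
`121 - 80 = 41`. Multiplied by `5c(c-1)(2c-1)`, the defect `Γ₂₅(1)` becomes
`2c(c-1)(5c² - 11c + 4)`. -/

theorem five_mul_sq_sub_eleven_mul_add_four_eq_zero_iff (x : ℝ) :
    5 * x ^ 2 - 11 * x + 4 = 0 ↔ x = (11 + √41) / 10 ∨ x = (11 - √41) / 10 := by
  have hdiscrim : discrim (5 : ℝ) (-11) 4 = √41 * √41 := by
    rw [discrim, Real.mul_self_sqrt (by norm_num)]
    norm_num
  convert quadratic_eq_zero_iff (by norm_num) hdiscrim x using 2 <;> ring_nf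

/-- c₂ = (11-√41)/10 is a root of 5c² - 11c + 4 = 0, and the stage-order-five
requirement Γ₂₅(1) = 0, after clearing the nonzero denominators
(multiplying by 5c(c-1)(2c-1)), becomes a polynomial equation in c₂ having
5c₂² - 11c₂ + 4 as a factor. -/
theorem stmt17 :
    (5 * ((11 - Real.sqrt 41) / 10)^2 - 11 * ((11 - Real.sqrt 41) / 10) + 4 = 0) ∧
    ∃ Q : Polynomial ℝ, ∀ c : ℝ, c ≠ 0 → c ≠ 1 → c ≠ 1/2 →
      (let u₂1 : ℝ := ((1:ℝ)+1)^2 * (1 - 2*1 + 3*(1:ℝ)^2/(2*c-1));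
      let ta211 : ℝ := (1:ℝ)^2*((1:ℝ)+1) - (1:ℝ)^2*((1:ℝ)+1)^2*(3*c-1)/(2*c*(2*c-1));
      let ta221 : ℝ := (1:ℝ)^2*((1:ℝ)+1)^2 / (2*c*(c-1)*(2*c-1));
      (-(1 - u₂1)/5 + ta211 + (c-1)^4 * ta221 - 1/5) * (5*c*(c-1)*(2*c-1))
        = (5*c^2 - 11*c + 4) * Q.eval c) := by
  refine ⟨(five_mul_sq_sub_eleven_mul_add_four_eq_zero_iff _).2 (Or.inr rfl),
    2 * X * (X - 1), fun c hc0 hc1 hc_half => ?_⟩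
  have hc1' : c - 1 ≠ 0 := sub_ne_zero.2 hc1
  have hc_half' : 2 * c - 1 ≠ 0 := fun h => hc_half (by linarith)
  simp only [eval_mul, eval_sub, eval_X, eval_ofNat, eval_one]
  field_simp
  ring
end
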